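/- For x > 1, let X = x³ and define the 3×3 real matrices A(x) = [[0,1,0],[0,0,1],[−1,x,x²]], T(x) = [[1+3x^{−3}, 1, 1],[x²+3x^{−4}, x^{−1}, −x^{−1}],[x⁴−x, 0, 2x^{−2}]], Λ(x) = diag(X−3, 1, −1), and R(x) = 3·[[−(X−1)^{−1}, 0, 2(X²−1)^{−1}],[4(X−1)^{−1}+4X^{−1}, 0, −(X−1)^{−1}−6X^{−1}(X²−1)^{−1}],[0, 0, (X+1)^{−1}]]. Then for all x > 1, T'(x) = A(x)·T(x) − T(x)·x^{−1}(Λ(x) + R(x)); consequently, if Z : (1,∞) → ℝ³ is differentiable and satisfies Z'(x) = x^{−1}(Λ(x) + R(x))·Z(x), then Y(x) = T(x)·Z(x) satisfies Y'(x) = A(x)·Y(x). -/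

import Mathlib

open Matrix

attribute [local instance] Matrix.normedAddCommGroup Matrix.normedSpace

/-- Companion matrix of `y''' − x²y'' − xy' + y = 0`. -/
noncomputable def Amat (x : ℝ) : Matrix (Fin 3) (Fin 3) ℝ :=
  !![0, 1, 0; 0, 0, 1; -1, x, x ^ 2]

/-- The transforming matrix `T(x)` of equation (6.5). -/
noncomputable def Tmat (x : ℝ) : Matrix (Fin 3) (Fin 3) ℝ :=
  !![1 + 3 * x ^ (-3 : ℤ), 1, 1;
     x ^ 2 + 3 * x ^ (-4 : ℤ), x⁻¹, -x⁻¹;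
     x ^ 4 - x, 0, 2 * x ^ (-2 : ℤ)]

/-- The diagonal part `Λ(x) = diag(X − 3, 1, −1)` with `X = x³`. -/
noncomputable def Lmat (x : ℝ) : Matrix (Fin 3) (Fin 3) ℝ :=
  Matrix.diagonal ![x ^ 3 - 3, 1, -1]

/-- The perturbation matrix `R(x)` with `X = x³`. -/
noncomputable def Rmat (x : ℝ) : Matrix (Fin 3) (Fin 3) ℝ :=
  (3 : ℝ) •
    !![-(x ^ 3 - 1)⁻¹, 0, 2 * ((x ^ 3) ^ 2 - 1)⁻¹;
       4 * (x ^ 3 - 1)⁻¹ + 4 * (x ^ 3)⁻¹, 0,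
         -(x ^ 3 - 1)⁻¹ - 6 * (x ^ 3)⁻¹ * ((x ^ 3) ^ 2 - 1)⁻¹;
       0, 0, (x ^ 3 + 1)⁻¹]

/-!
If `T' = A T − T B` and `Z' = B Z`, the product rule gives
`(T Z)' = A T Z − T B Z + T B Z = A (T Z)`. So it suffices to differentiate `T` entrywise and
check the matrix identity `T' = A T − x⁻¹ T (Λ + R)`, an identity of rational functions of `x`
whose denominators `x`, `x³ − 1`, `x³ + 1`, `x⁶ − 1` do not vanish for `x > 1`.
-/

section MatrixCalculus

variable {𝕜 : Type*} [NontriviallyNormedField 𝕜] {m n : Type*} [Fintype n]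

theorem HasDerivAt.mulVec {M : 𝕜 → Matrix m n 𝕜} {v : 𝕜 → n → 𝕜}
    {M' : Matrix m n 𝕜} {v' : n → 𝕜} {x : 𝕜}
    (hM : HasDerivAt M M' x) (hv : HasDerivAt v v' x) :
    HasDerivAt (fun t => M t *ᵥ v t) (M' *ᵥ v x + M x *ᵥ v') x := by
  refine hasDerivAt_pi.2 fun i => ?_
  have hMi : ∀ j, HasDerivAt (fun t => M t i j) (M' i j) x := fun j =>
    hasDerivAt_pi.1 (hasDerivAt_pi.1 hM i) j
  have hvj : ∀ j, HasDerivAt (fun t => v t j) (v' j) x := hasDerivAt_pi.1 hv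
  simpa only [Matrix.mulVec, dotProduct, Pi.add_apply, ← Finset.sum_add_distrib] using
    HasDerivAt.fun_sum fun j _ => (hMi j).fun_mul (hvj j)

theorem HasDerivAt.mulVec_of_hasDerivAt_conj {T : 𝕜 → Matrix n n 𝕜} {Z : 𝕜 → n → 𝕜}
    {A B : Matrix n n 𝕜} {x : 𝕜}
    (hT : HasDerivAt T (A * T x - T x * B) x) (hZ : HasDerivAt Z (B *ᵥ Z x) x) :
    HasDerivAt (fun t => T t *ᵥ Z t) (A *ᵥ (T x *ᵥ Z x)) x := by
  convert hT.mulVec hZ using 1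
  rw [mulVec_mulVec, mulVec_mulVec, sub_mulVec, sub_add_cancel]

end MatrixCalculus

noncomputable def Tmat' (x : ℝ) : Matrix (Fin 3) (Fin 3) ℝ :=
  !![-9 * x ^ (-4 : ℤ), 0, 0;
     2 * x - 12 * x ^ (-5 : ℤ), -(x ^ 2)⁻¹, (x ^ 2)⁻¹;
     4 * x ^ 3 - 1, 0, -4 * x ^ (-3 : ℤ)]

theorem hasDerivAt_Tmat {x : ℝ} (hx : x ≠ 0) : HasDerivAt Tmat (Tmat' x) x := by
  have hzpow (k : ℤ) := hasDerivAt_zpow k x (Or.inl hx)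
  refine hasDerivAt_pi.2 fun i => hasDerivAt_pi.2 fun j => ?_
  fin_cases i <;> fin_cases j <;>
    simp only [Tmat, Tmat', of_apply, cons_val', cons_val_zero, cons_val_one, cons_val_two,
      head_cons, tail_cons, empty_val', cons_val_fin_one, Fin.mk_zero, Fin.mk_one,
      Fin.reduceFinMk, head_fin_const]
  · exact (((hzpow (-3)).const_mul 3).const_add 1).congr_deriv (by norm_num; ring)
  · exact hasDerivAt_const x 1
  · exact hasDerivAt_const x 1
  · exact ((hasDerivAt_pow 2 x).fun_add ((hzpow (-4)).const_mul 3)).congr_deriv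
      (by norm_num; ring)
  · exact hasDerivAt_inv hx
  · simpa using (hasDerivAt_inv hx).fun_neg
  · simpa using (hasDerivAt_pow 4 x).fun_sub (hasDerivAt_id' x)
  · exact hasDerivAt_const x 0
  · exact ((hzpow (-2)).const_mul 2).congr_deriv (by norm_num; ring)

theorem Tmat'_eq {x : ℝ} (hx : 1 < x) :
    Tmat' x = Amat x * Tmat x - Tmat x * (x⁻¹ • (Lmat x + Rmat x)) := by
  have hx0 : x ≠ 0 := by positivity
  have hX : 1 < x ^ 3 := one_lt_pow₀ hx (by norm_num)
  have hX₁ : x ^ 3 - 1 ≠ 0 := by linarith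
  have hX₂ : x ^ 3 + 1 ≠ 0 := by linarith
  have hX₃ : x ^ 6 - 1 ≠ 0 := by nlinarith
  ext i j
  fin_cases i <;> fin_cases j <;>
    simp only [Amat, Tmat, Tmat', Lmat, diagonal_vec3, Rmat, Matrix.sub_apply, mul_apply,
      Fin.sum_univ_three, Matrix.smul_apply, Matrix.add_apply, of_apply, cons_val',
      cons_val_zero, cons_val_one, cons_val_two, head_cons, tail_cons, empty_val',
      cons_val_fin_one, smul_eq_mul, _root_.zpow_neg, zpow_ofNat, Fin.mk_zero, Fin.mk_one,
      Fin.reduceFinMk, head_fin_const] <;>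
    field_simp <;> ring

/-- The change of variable `Y = T(x)Z` takes `Z' = x⁻¹(Λ + R)Z` into `Y' = A(x)Y`:
`T' = A·T − T·x⁻¹(Λ + R)` on `(1,∞)`, and consequently any solution `Z` of the
transformed system yields a solution `Y = T·Z` of the original system. -/
theorem transformation_conjugates_systems :
    (∀ x : ℝ, 1 < x →
      HasDerivAt Tmat (Amat x * Tmat x - Tmat x * (x⁻¹ • (Lmat x + Rmat x))) x) ∧
    ∀ Z : ℝ → Fin 3 → ℝ,
      (∀ x : ℝ, 1 < x → HasDerivAt Z (x⁻¹ • ((Lmat x + Rmat x).mulVec (Z x))) x) →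
      ∀ x : ℝ, 1 < x →
        HasDerivAt (fun t => (Tmat t).mulVec (Z t))
          ((Amat x).mulVec ((Tmat x).mulVec (Z x))) x := by
  have hT : ∀ x : ℝ, 1 < x →
      HasDerivAt Tmat (Amat x * Tmat x - Tmat x * (x⁻¹ • (Lmat x + Rmat x))) x :=
    fun x hx => Tmat'_eq hx ▸ hasDerivAt_Tmat (by positivity)
  refine ⟨hT, fun Z hZ x hx => (hT x hx).mulVec_of_hasDerivAt_conj ?_⟩
  simpa only [smul_mulVec] using hZ x hx
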